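/- Let n, b, m be positive integers, let x be a real n×b matrix, let G be a real m×b matrix, let η be a real number, and let λ > 0. Define the TrAct objective F(ΔW) = ‖−η·b·G − ΔW·x‖_F² + λ·b·‖ΔW‖_F² for ΔW ∈ ℝ^{m×n} (with b cast to a real scalar). Then ΔW* = −η · G · xᵀ · (x·xᵀ/b + λ·Iₙ)⁻¹ is a global minimizer of F, i.e., F(ΔW*) ≤ F(ΔW) for every ΔW ∈ ℝ^{m×n}. -/

import Mathlib

open Matrix

/-- Squared Frobenius norm of a real matrix. -/
noncomputable def frobSq {k l : ℕ} (A : Matrix (Fin k) (Fin l) ℝ) : ℝ :=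
  ∑ i, ∑ j, (A i j) ^ 2

/-! For `μ ≥ 0` the ridge objective `W ↦ ‖C - W x‖² + μ‖W‖²` is a convex quadratic, so any `W`
satisfying the normal equation `(C - W x) xᵀ = μ W` is a global minimiser: the cross terms of the
expansion around `W` cancel, and `f(W + D) = f(W) + ‖D x‖² + μ‖D‖²`. The TrAct objective is the
ridge objective with `C = -η b G` and `μ = λ b`, and `ΔW*` solves its normal equation because
`x xᵀ + λ b I = b (x xᵀ / b + λ I)` is positive definite, hence invertible. -/

theorem frobSq_eq_trace {k l : ℕ} (A : Matrix (Fin k) (Fin l) ℝ) :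
    frobSq A = trace (A * Aᵀ) := by
  simp only [frobSq, trace, diag_apply, mul_apply, transpose_apply, sq]

theorem frobSq_nonneg {k l : ℕ} (A : Matrix (Fin k) (Fin l) ℝ) : 0 ≤ frobSq A := by
  unfold frobSq
  positivity

theorem trace_mul_transpose_comm {k l : ℕ} (A B : Matrix (Fin k) (Fin l) ℝ) :
    trace (B * Aᵀ) = trace (A * Bᵀ) := by
  rw [← trace_transpose, transpose_mul, transpose_transpose]

theorem frobSq_sub {k l : ℕ} (A B : Matrix (Fin k) (Fin l) ℝ) :
    frobSq (A - B) = frobSq A - 2 * trace (A * Bᵀ) + frobSq B := by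
  simp only [frobSq_eq_trace, transpose_sub, Matrix.sub_mul, Matrix.mul_sub, trace_sub,
    trace_mul_transpose_comm A B]
  ring

theorem frobSq_add {k l : ℕ} (A B : Matrix (Fin k) (Fin l) ℝ) :
    frobSq (A + B) = frobSq A + 2 * trace (A * Bᵀ) + frobSq B := by
  simp only [frobSq_eq_trace, transpose_add, Matrix.add_mul, Matrix.mul_add, trace_add,
    trace_mul_transpose_comm A B]
  ring

section Ridge

variable {m n b : ℕ}

noncomputable def ridgeObjective (C : Matrix (Fin m) (Fin b) ℝ) (x : Matrix (Fin n) (Fin b) ℝ)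
    (μ : ℝ) (W : Matrix (Fin m) (Fin n) ℝ) : ℝ :=
  frobSq (C - W * x) + μ * frobSq W

variable {C : Matrix (Fin m) (Fin b) ℝ} {x : Matrix (Fin n) (Fin b) ℝ} {μ : ℝ}
  {W : Matrix (Fin m) (Fin n) ℝ}

theorem ridgeObjective_add_of_normal_eq (hW : (C - W * x) * xᵀ = μ • W)
    (D : Matrix (Fin m) (Fin n) ℝ) :
    ridgeObjective C x μ (W + D) = ridgeObjective C x μ W + (frobSq (D * x) + μ * frobSq D) := by
  have hcross : trace ((C - W * x) * (D * x)ᵀ) = μ * trace (W * Dᵀ) := by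
    rw [transpose_mul, ← Matrix.mul_assoc, hW, smul_mul, trace_smul, smul_eq_mul]
  have hres : C - (W + D) * x = (C - W * x) - D * x := by
    rw [Matrix.add_mul]
    abel
  rw [ridgeObjective, ridgeObjective, hres, frobSq_sub, frobSq_add, hcross]
  ring

theorem ridgeObjective_le_of_normal_eq (hμ : 0 ≤ μ) (hW : (C - W * x) * xᵀ = μ • W)
    (W' : Matrix (Fin m) (Fin n) ℝ) : ridgeObjective C x μ W ≤ ridgeObjective C x μ W' := by
  have hgap := ridgeObjective_add_of_normal_eq hW (W' - W)
  rw [add_sub_cancel] at hgap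
  rw [hgap, le_add_iff_nonneg_right]
  have := frobSq_nonneg ((W' - W) * x)
  have := frobSq_nonneg (W' - W)
  positivity

theorem normal_eq_of_mul_gram_add_smul_one (hW : W * (x * xᵀ + μ • 1) = C * xᵀ) :
    (C - W * x) * xᵀ = μ • W := by
  rw [Matrix.sub_mul, ← hW, Matrix.mul_add, Matrix.mul_assoc, Matrix.mul_smul, Matrix.mul_one]
  abel

end Ridge

theorem posDef_smul_gram_add_smul_one {n b : ℕ} (x : Matrix (Fin n) (Fin b) ℝ) {c lam : ℝ}
    (hc : 0 ≤ c) (hlam : 0 < lam) :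
    (c • (x * xᵀ) + lam • (1 : Matrix (Fin n) (Fin n) ℝ)).PosDef := by
  rw [add_comm]
  refine (PosDef.one.smul hlam).add_posSemidef (PosSemidef.smul ?_ hc)
  simpa using posSemidef_self_mul_conjTranspose x

theorem tract_global_min_general
    (n b m : ℕ) (hb : 0 < b)
    (x : Matrix (Fin n) (Fin b) ℝ) (G : Matrix (Fin m) (Fin b) ℝ)
    (η lam : ℝ) (hlam : 0 < lam)
    (F : Matrix (Fin m) (Fin n) ℝ → ℝ)
    (hF : ∀ ΔW, F ΔW = frobSq ((-(η * (b : ℝ))) • G - ΔW * x) + lam * (b : ℝ) * frobSq ΔW)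
    (ΔWstar : Matrix (Fin m) (Fin n) ℝ)
    (hΔWstar : ΔWstar =
      (-η) • (G * xᵀ * ((b : ℝ)⁻¹ • (x * xᵀ) + lam • (1 : Matrix (Fin n) (Fin n) ℝ))⁻¹)) :
    ∀ ΔW : Matrix (Fin m) (Fin n) ℝ, F ΔWstar ≤ F ΔW := by
  have hb' : (b : ℝ) ≠ 0 := by positivity
  set S := (b : ℝ)⁻¹ • (x * xᵀ) + lam • (1 : Matrix (Fin n) (Fin n) ℝ)
  have hS : IsUnit S.det :=
    (isUnit_iff_isUnit_det S).1 (posDef_smul_gram_add_smul_one x (by positivity) hlam).isUnit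
  have hgram : x * xᵀ + (lam * b) • 1 = (b : ℝ) • S := by
    rw [smul_add, smul_smul, smul_smul, mul_inv_cancel₀ hb', one_smul, mul_comm]
  have hnormal : ΔWstar * (x * xᵀ + (lam * b) • 1) = (-(η * b)) • G * xᵀ := by
    rw [hgram, hΔWstar, Matrix.mul_smul, Matrix.smul_mul, nonsing_inv_mul_cancel_right S _ hS,
      smul_smul, Matrix.smul_mul, mul_comm, neg_mul]
  intro ΔW
  simpa only [hF, ridgeObjective] using
    ridgeObjective_le_of_normal_eq (by positivity) (normal_eq_of_mul_gram_add_smul_one hnormal) ΔW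

/-- The TrAct objective `F(ΔW) = ‖−η·b·G − ΔW·x‖_F² + λ·b·‖ΔW‖_F²` is globally minimized by
`ΔW* = −η · G · xᵀ · (x·xᵀ/b + λ·Iₙ)⁻¹`. -/
theorem tract_global_min
    (n b m : ℕ) (hn : 0 < n) (hb : 0 < b) (hm : 0 < m)
    (x : Matrix (Fin n) (Fin b) ℝ) (G : Matrix (Fin m) (Fin b) ℝ)
    (η lam : ℝ) (hlam : 0 < lam)
    (F : Matrix (Fin m) (Fin n) ℝ → ℝ)
    (hF : ∀ ΔW, F ΔW = frobSq ((-(η * (b : ℝ))) • G - ΔW * x) + lam * (b : ℝ) * frobSq ΔW)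
    (ΔWstar : Matrix (Fin m) (Fin n) ℝ)
    (hΔWstar : ΔWstar =
      (-η) • (G * xᵀ * ((b : ℝ)⁻¹ • (x * xᵀ) + lam • (1 : Matrix (Fin n) (Fin n) ℝ))⁻¹)) :
    ∀ ΔW : Matrix (Fin m) (Fin n) ℝ, F ΔWstar ≤ F ΔW :=
  tract_global_min_general n b m hb x G η lam hlam F hF ΔWstar hΔWstar
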